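/- Let M₁ and M₂ be two fair matchings between the same duplicate-free list of bids B and list of asks A such that Q(M₁) = Q(M₂). Then for every order ω (bid or ask) the total traded quantity of ω in M₁ equals the total traded quantity of ω in M₂. -/

import Mathlib

structure Bid where
  id : ℕ
  timestamp : ℕ
  quantity : ℕ
  price : ℕ
deriving DecidableEq

structure Ask where
  id : ℕ
  timestamp : ℕ
  quantity : ℕ
  price : ℕ
deriving DecidableEq

structure Transaction where
  bid : Bid
  ask : Ask
  quantity : ℕ
  price : ℕ
deriving DecidableEq

/-- Total traded quantity of a list of transactions. -/
def Qty (M : List Transaction) : ℕ := (M.map Transaction.quantity).sum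

/-- Total traded quantity of bid `b` in `M`. -/
def QtyBid (b : Bid) (M : List Transaction) : ℕ :=
  ((M.filter (fun m => m.bid == b)).map Transaction.quantity).sum

/-- Total traded quantity of ask `a` in `M`. -/
def QtyAsk (a : Ask) (M : List Transaction) : ℕ :=
  ((M.filter (fun m => m.ask == a)).map Transaction.quantity).sum

/-- Total traded quantity between bid `b` and ask `a` in `M`. -/
def QtyBidAsk (b : Bid) (a : Ask) (M : List Transaction) : ℕ :=
  ((M.filter (fun m => m.bid == b && m.ask == a)).map Transaction.quantity).sum

/-- Sum of quantities of a list of bids. -/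
def QB (B : List Bid) : ℕ := (B.map Bid.quantity).sum

/-- Sum of quantities of a list of asks. -/
def QA (A : List Ask) : ℕ := (A.map Ask.quantity).sum

/-- `M` is a matching between bids `B` and asks `A`. -/
def Matching (B : List Bid) (A : List Ask) (M : List Transaction) : Prop :=
  (∀ m ∈ M, m.ask.price ≤ m.bid.price) ∧
  (∀ m ∈ M, m.bid ∈ B) ∧
  (∀ m ∈ M, m.ask ∈ A) ∧
  (∀ b ∈ B, QtyBid b M ≤ b.quantity) ∧
  (∀ a ∈ A, QtyAsk a M ≤ a.quantity)

/-- Individual rationality. -/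
def IsIR (M : List Transaction) : Prop :=
  ∀ m ∈ M, m.ask.price ≤ m.price ∧ m.price ≤ m.bid.price

/-- Uniformity: all trade prices equal. -/
def IsUniform (M : List Transaction) : Prop :=
  ∀ m1 ∈ M, ∀ m2 ∈ M, m1.price = m2.price

/-- `b1` is more competitive than `b2`. -/
def MoreCompetitiveBid (b1 b2 : Bid) : Prop :=
  b2.price < b1.price ∨ (b1.price = b2.price ∧ b1.timestamp < b2.timestamp)

/-- `a1` is more competitive than `a2`. -/
def MoreCompetitiveAsk (a1 a2 : Ask) : Prop :=
  a1.price < a2.price ∨ (a1.price = a2.price ∧ a1.timestamp < a2.timestamp)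

def FairOnBids (B : List Bid) (M : List Transaction) : Prop :=
  ∀ b1 ∈ B, ∀ b2 ∈ B, MoreCompetitiveBid b1 b2 → 1 ≤ QtyBid b2 M →
    QtyBid b1 M = b1.quantity

def FairOnAsks (A : List Ask) (M : List Transaction) : Prop :=
  ∀ a1 ∈ A, ∀ a2 ∈ A, MoreCompetitiveAsk a1 a2 → 1 ≤ QtyAsk a2 M →
    QtyAsk a1 M = a1.quantity

def IsFair (B : List Bid) (A : List Ask) (M : List Transaction) : Prop :=
  FairOnBids B M ∧ FairOnAsks A M

/-- "at least as competitive as" order on bids (for sorting, most competitive first). -/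
def BidGE (b1 b2 : Bid) : Prop := ¬ MoreCompetitiveBid b2 b1

/-- "at least as competitive as" order on asks (for sorting, most competitive first). -/
def AskGE (a1 a2 : Ask) : Prop := ¬ MoreCompetitiveAsk a2 a1


lemma qtybid_cons (b : Bid) (m : Transaction) (M : List Transaction) :
    QtyBid b (m :: M) = (if m.bid = b then m.quantity else 0) + QtyBid b M := by
  simp only [QtyBid, List.filter_cons]
  by_cases h : m.bid = b
  · simp [h]
  · simp [h]

lemma qtyask_cons (a : Ask) (m : Transaction) (M : List Transaction) :
    QtyAsk a (m :: M) = (if m.ask = a then m.quantity else 0) + QtyAsk a M := by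
  simp only [QtyAsk, List.filter_cons]
  by_cases h : m.ask = a
  · simp [h]
  · simp [h]

lemma my_sum_map_add {α : Type} (l : List α) (f g : α → ℕ) :
    (l.map (fun x => f x + g x)).sum = (l.map f).sum + (l.map g).sum := by
  induction l with
  | nil => simp
  | cons x l ih => simp [ih]; omega

lemma my_sum_if_eq {α : Type} [DecidableEq α] (l : List α) (hnd : l.Nodup) (x : α)
    (hx : x ∈ l) (c : ℕ) :
    (l.map (fun b => if x = b then c else 0)).sum = c := by
  induction l with
  | nil => cases hx
  | cons b l ih =>
    rcases List.mem_cons.mp hx with heq | hx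
    · subst heq
      have hx' : x ∉ l := (List.nodup_cons.mp hnd).1
      have hz : (l.map (fun b => if x = b then c else 0)).sum = 0 := by
        apply List.sum_eq_zero
        intro y hy
        obtain ⟨b, hb, rfl⟩ := List.mem_map.mp hy
        have : x ≠ b := by
          intro h
          exact hx' (h ▸ hb)
        simp [this]
      simp [hz]
    · have hne : x ≠ b := by
        intro h
        exact (List.nodup_cons.mp hnd).1 (h ▸ hx)
      simp [hne, ih (List.nodup_cons.mp hnd).2 hx]

lemma sum_qtybid (B : List Bid) (M : List Transaction) (hnd : B.Nodup)
    (h : ∀ m ∈ M, m.bid ∈ B) :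
    (B.map (fun b => QtyBid b M)).sum = Qty M := by
  induction M with
  | nil => simp [QtyBid, Qty]
  | cons m M ih =>
    have h1 := ih (fun m' hm' => h m' (List.mem_cons_of_mem _ hm'))
    have h2 : (B.map (fun b => QtyBid b (m :: M))).sum
        = (B.map (fun b => if m.bid = b then m.quantity else 0)).sum
          + (B.map (fun b => QtyBid b M)).sum := by
      rw [← my_sum_map_add]
      simp only [qtybid_cons]
    rw [h2, h1, my_sum_if_eq B hnd m.bid (h m List.mem_cons_self)]
    simp [Qty]

lemma sum_qtyask (A : List Ask) (M : List Transaction) (hnd : A.Nodup)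
    (h : ∀ m ∈ M, m.ask ∈ A) :
    (A.map (fun a => QtyAsk a M)).sum = Qty M := by
  induction M with
  | nil => simp [QtyAsk, Qty]
  | cons m M ih =>
    have h1 := ih (fun m' hm' => h m' (List.mem_cons_of_mem _ hm'))
    have h2 : (A.map (fun a => QtyAsk a (m :: M))).sum
        = (A.map (fun a => if m.ask = a then m.quantity else 0)).sum
          + (A.map (fun a => QtyAsk a M)).sum := by
      rw [← my_sum_map_add]
      simp only [qtyask_cons]
    rw [h2, h1, my_sum_if_eq A hnd m.ask (h m List.mem_cons_self)]
    simp [Qty]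

lemma key_aux {α : Type} (L : List α) (f g q : α → ℕ) (mc : α → α → Prop)
    (htot : ∀ x ∈ L, ∀ y ∈ L, x ≠ y → mc x y ∨ mc y x)
    (hf1 : ∀ x ∈ L, ∀ y ∈ L, mc x y → 1 ≤ f y → f x = q x)
    (hf2 : ∀ x ∈ L, ∀ y ∈ L, mc x y → 1 ≤ g y → g x = q x)
    (hb1 : ∀ x ∈ L, f x ≤ q x) (hb2 : ∀ x ∈ L, g x ≤ q x)
    (hsum : (L.map f).sum = (L.map g).sum)
    (b : α) (hbB : b ∈ L) (hlt : f b < g b) : False := by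
  by_cases hall : ∀ x ∈ L, f x ≤ g x
  · exact absurd hsum (ne_of_lt (List.sum_lt_sum f g hall ⟨b, hbB, hlt⟩))
  · push_neg at hall
    obtain ⟨b1, hb1B, hgt⟩ := hall
    have hbne : b ≠ b1 := by rintro rfl; omega
    rcases htot b hbB b1 hb1B hbne with hmc | hmc
    · have h1 := hf1 b hbB b1 hb1B hmc (by omega)
      have h2 := hb2 b hbB
      omega
    · have h1 := hf2 b1 hb1B b hbB hmc (by omega)
      have h2 := hb1 b1 hb1B
      omega

lemma key_lemma {α : Type} (L : List α) (f g q : α → ℕ) (mc : α → α → Prop)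
    (htot : ∀ x ∈ L, ∀ y ∈ L, x ≠ y → mc x y ∨ mc y x)
    (hf1 : ∀ x ∈ L, ∀ y ∈ L, mc x y → 1 ≤ f y → f x = q x)
    (hf2 : ∀ x ∈ L, ∀ y ∈ L, mc x y → 1 ≤ g y → g x = q x)
    (hb1 : ∀ x ∈ L, f x ≤ q x) (hb2 : ∀ x ∈ L, g x ≤ q x)
    (hsum : (L.map f).sum = (L.map g).sum) :
    ∀ x ∈ L, f x = g x := by
  intro b hbB
  rcases lt_trichotomy (f b) (g b) with h | h | h
  · exact absurd (key_aux L f g q mc htot hf1 hf2 hb1 hb2 hsum b hbB h) (fun hF => hF)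
  · exact h
  · exact absurd (key_aux L g f q mc htot hf2 hf1 hb2 hb1 hsum.symm b hbB h) (fun hF => hF)

theorem statement_17 (B : List Bid) (A : List Ask) (M1 M2 : List Transaction)
    (hB : (B.map Bid.id).Nodup) (hA : (A.map Ask.id).Nodup)
    (htotB : ∀ b1 ∈ B, ∀ b2 ∈ B, b1 ≠ b2 →
      MoreCompetitiveBid b1 b2 ∨ MoreCompetitiveBid b2 b1)
    (htotA : ∀ a1 ∈ A, ∀ a2 ∈ A, a1 ≠ a2 →
      MoreCompetitiveAsk a1 a2 ∨ MoreCompetitiveAsk a2 a1)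
    (hM1 : Matching B A M1) (hM2 : Matching B A M2)
    (hF1 : IsFair B A M1) (hF2 : IsFair B A M2)
    (hQ : Qty M1 = Qty M2) :
    (∀ b ∈ B, QtyBid b M1 = QtyBid b M2) ∧
    (∀ a ∈ A, QtyAsk a M1 = QtyAsk a M2)  := by
  obtain ⟨_, hMb1, hMa1, hQb1, hQa1⟩ := hM1
  obtain ⟨_, hMb2, hMa2, hQb2, hQa2⟩ := hM2
  have hBnd : B.Nodup := hB.of_map
  have hAnd : A.Nodup := hA.of_map
  have hsB : (B.map (fun b => QtyBid b M1)).sum = (B.map (fun b => QtyBid b M2)).sum := by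
    rw [sum_qtybid B M1 hBnd hMb1, sum_qtybid B M2 hBnd hMb2, hQ]
  have hsA : (A.map (fun a => QtyAsk a M1)).sum = (A.map (fun a => QtyAsk a M2)).sum := by
    rw [sum_qtyask A M1 hAnd hMa1, sum_qtyask A M2 hAnd hMa2, hQ]
  constructor
  · exact key_lemma B (fun b => QtyBid b M1) (fun b => QtyBid b M2) Bid.quantity
      MoreCompetitiveBid htotB hF1.1 hF2.1 hQb1 hQb2 hsB
  · exact key_lemma A (fun a => QtyAsk a M1) (fun a => QtyAsk a M2) Ask.quantity
      MoreCompetitiveAsk htotA hF1.2 hF2.2 hQa1 hQa2 hsA
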